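/- Let k ≥ 1 be an integer, h > 0, and a ∈ ℝ. For each ℓ ∈ {0, …, k−1} consider the stencil of k contiguous cells with left-shift ℓ relative to the cell I = [a, a+h] (interfaces a − ℓ·h + j·h, j = 0, …, k), and let q_ℓ be the reconstruction polynomial of u on that stencil. Let b̃_0, …, b̃_{k−1} and b_0, …, b_{k−1} be real weights that are consistent: Σ_{ℓ=0}^{k−1} b̃_ℓ = 1 and Σ_{ℓ=0}^{k−1} b_ℓ = 1. Assume u : [a − (k−1)·h, a + k·h] → ℝ is (k+1)-times continuously differentiable. Then there exist points ξ̃_0, …, ξ̃_{k−1} and ξ_0, …, ξ_{k−1}, with ξ̃_ℓ, ξ_ℓ in the open stencil interval (a − ℓ·h, a + (k−ℓ)·h), such that Σ_ℓ b̃_ℓ · q_ℓ(a) = u(a) − ((−h)^k/(k+1)!) · Σ_ℓ b̃_ℓ · ζ̃^ℓ · u^{(k)}(ξ̃_ℓ) with ζ̃^ℓ = (−1)^ℓ · ℓ! · (k−ℓ)!, and Σ_ℓ b_ℓ · q_ℓ(a+h) = u(a+h) − ((−h)^k/(k+1)!) · Σ_ℓ b_ℓ · ζ^ℓ · u^{(k)}(ξ_ℓ)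 with ζ^ℓ = (−1)^{ℓ+1} · (ℓ+1)! · (k−ℓ−1)!. -/

import Mathlib

open Set Polynomial intervalIntegral

/-!
On the `ℓ`-th stencil with nodes `y_j = a - ℓh + jh`, the reconstruction `Q` interpolates the
primitive `U` of `u`, so `U - Q - c w` vanishes at all `k + 1` nodes, where `w = ∏ (X - y_j)`.
Choose `c` so that its derivative `u - Q' - c w'` also vanishes at the node `y_i`. Rolle's theorem
gives `k` zeros of `u - Q' - c w'` strictly between the nodes, hence `k + 1` zeros together with
`y_i`, and `k` more applications of Rolle's theorem give a zero `ξ` of `u⁽ᵏ⁾ - c (k + 1)!`. Thus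
`u(y_i) - Q'(y_i) = w'(y_i) u⁽ᵏ⁾(ξ) / (k + 1)!` with `w'(y_i) = (-1)^(k-i) i! (k-i)! hᵏ`.
The interfaces `a` and `a + h` are the nodes `i = ℓ` and `i = ℓ + 1`, and consistent weights
turn the stencilwise identities into the weighted ones.
-/

theorem Set.OrdConnected.exists_finset_deriv_eq_zero {S : Set ℝ} (hS : S.OrdConnected)
    {f f' : ℝ → ℝ} (hf : ContinuousOn f S) (hf' : ∀ x ∈ interior S, HasDerivAt f (f' x) x)
    {s : Finset ℝ} (hs : ↑s ⊆ S) (hzero : ∀ x ∈ s, f x = 0) :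
    ∃ t : Finset ℝ, ↑t ⊆ interior S ∧ Disjoint s t ∧ s.card ≤ t.card + 1 ∧
      ∀ x ∈ t, f' x = 0 := by
  have hIoo : ∀ x ∈ s, ∀ y ∈ s, Ioo x y ⊆ interior S := fun x hx y hy =>
    interior_Icc (a := x) ▸ interior_mono (hS.out (hs hx) (hs hy))
  have hrolle : ∀ x ∈ s, ∀ y ∈ s, x < y → ∃ z ∈ Ioo x y, f' z = 0 := fun x hx y hy hxy =>
    exists_hasDerivAt_eq_zero hxy (hf.mono (hS.out (hs hx) (hs hy)))
      ((hzero x hx).trans (hzero y hy).symm) fun z hz => hf' z (hIoo x hx y hy hz)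
  choose! z hz hz' using hrolle
  -- a Rolle point for every ordered pair of zeros; those of consecutive pairs interleave `s`
  set T := ((s ×ˢ s).filter fun p => p.1 < p.2).image fun p => z p.1 p.2
  have hT : ∀ x ∈ T \ s, ∃ p ∈ s, ∃ q ∈ s, p < q ∧ z p q = x := by
    intro x hx
    obtain ⟨⟨p, q⟩, hpq, rfl⟩ := Finset.mem_image.1 (Finset.mem_sdiff.1 hx).1
    simp only [Finset.mem_filter, Finset.mem_product] at hpq
    exact ⟨p, hpq.1.1, q, hpq.1.2, hpq.2, rfl⟩
  refine ⟨T \ s, fun x hx => ?_, Finset.disjoint_sdiff, ?_, fun x hx => ?_⟩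
  · obtain ⟨p, hp, q, hq, hpq, rfl⟩ := hT x hx
    exact hIoo p hp q hq (hz p hp q hq hpq)
  · refine Finset.card_le_sdiff_of_interleaved fun x hx y hy hxy _ => ⟨z x y, ?_, hz x hx y hy hxy⟩
    exact Finset.mem_image.2 ⟨(x, y), by simp [hx, hy, hxy], rfl⟩
  · obtain ⟨p, hp, q, hq, hpq, rfl⟩ := hT x hx
    exact hz' p hp q hq hpq

theorem Set.OrdConnected.exists_hasDerivAt_chain_eq_zero {S : Set ℝ} (hS : S.OrdConnected)
    {f : ℕ → ℝ → ℝ} {n : ℕ} (hf : ContinuousOn (f 0) S)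
    (hderiv : ∀ j ≤ n, ∀ x ∈ interior S, HasDerivAt (f j) (f (j + 1) x) x)
    {s : Finset ℝ} (hs : ↑s ⊆ S) (hcard : n + 2 ≤ s.card) (hzero : ∀ x ∈ s, f 0 x = 0) :
    ∃ ξ ∈ interior S, f (n + 1) ξ = 0 := by
  induction n generalizing S f s with
  | zero =>
    obtain ⟨t, htS, -, hst, ht⟩ := hS.exists_finset_deriv_eq_zero hf (hderiv 0 le_rfl) hs hzero
    obtain ⟨ξ, hξ⟩ := Finset.card_pos.1 (by omega : 0 < t.card)
    exact ⟨ξ, htS hξ, ht ξ hξ⟩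
  | succ n ih =>
    obtain ⟨t, htS, -, hst, ht⟩ :=
      hS.exists_finset_deriv_eq_zero hf (hderiv 0 n.succ.zero_le) hs hzero
    have hf₁ : ContinuousOn (f 1) (interior S) := fun x hx =>
      (hderiv 1 (by omega) x hx).continuousAt.continuousWithinAt
    simpa only [interior_interior] using ih (f := fun j => f (j + 1)) hS.interior hf₁
      (fun j hj x hx => hderiv (j + 1) (by omega) x (interior_subset hx)) htS (by omega) ht

theorem ContDiffOn.hasDerivAt_iteratedDerivWithin {𝕜 F : Type*} [NontriviallyNormedField 𝕜]
    [NormedAddCommGroup F] [NormedSpace 𝕜 F] {f : 𝕜 → F} {s : Set 𝕜} {n m : ℕ}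
    (hf : ContDiffOn 𝕜 n f s) (hs : UniqueDiffOn 𝕜 s) (hm : m < n) {x : 𝕜} (hx : s ∈ nhds x) :
    HasDerivAt (iteratedDerivWithin m f s) (iteratedDerivWithin (m + 1) f s x) x := by
  rw [iteratedDerivWithin_succ, derivWithin_of_mem_nhds hx]
  exact ((hf.differentiableOn_iteratedDerivWithin (by exact_mod_cast hm) hs).differentiableAt
    hx).hasDerivAt

theorem Polynomial.Monic.iterate_derivative_natDegree {R : Type*} [CommSemiring R] {p : R[X]}
    (hp : p.Monic) : derivative^[p.natDegree] p = C (p.natDegree.factorial : R) := by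
  rw [eq_C_of_natDegree_le_zero ((natDegree_iterate_derivative p _).trans (by simp)),
    coeff_iterate_derivative, zero_add, hp.coeff_natDegree, Nat.descFactorial_self, nsmul_one]

theorem iterate_derivative_add_C_mul_nodal {ι R : Type*} [CommRing R] [Nontrivial R]
    {s : Finset ι} (v : ι → R) {P : R[X]} (hP : P.natDegree < s.card) (c : R) :
    derivative^[s.card] (P + C c * Lagrange.nodal s v) = C (c * s.card.factorial) := by
  rw [iterate_map_add, iterate_derivative_eq_zero hP, iterate_derivative_C_mul, zero_add,
    ← Lagrange.natDegree_nodal (v := v), Lagrange.nodal_monic.iterate_derivative_natDegree, C_mul]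

theorem exists_finset_eq_eval_derivative_of_interpolates_primitive {u : ℝ → ℝ} {α β : ℝ}
    (hu : ContinuousOn u (Icc α β)) {s : Finset ℝ} (hs : ↑s ⊆ Icc α β) {R : ℝ[X]}
    (hR : ∀ x ∈ s, R.eval x = ∫ t in α..x, u t) :
    ∃ t : Finset ℝ, ↑t ⊆ Ioo α β ∧ Disjoint s t ∧ s.card ≤ t.card + 1 ∧
      ∀ x ∈ t, u x = (derivative R).eval x := by
  have hU : ContinuousOn (fun x => ∫ t in α..x, u t) (Icc α β) := by
    rcases le_or_gt α β with hαβ | hαβ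
    · simpa [uIcc_of_le hαβ] using continuousOn_primitive_interval (μ := MeasureTheory.volume)
        (a := α) (b := β) (by simpa [uIcc_of_le hαβ] using hu.integrableOn_Icc)
    · simp [Icc_eq_empty_of_lt hαβ]
  have hU' : ∀ x ∈ interior (Icc α β),
      HasDerivAt (fun x => (∫ t in α..x, u t) - R.eval x) (u x - (derivative R).eval x) x := by
    intro x hx
    rw [interior_Icc] at hx
    refine .sub (integral_hasDerivAt_right ?_ ?_ ?_) (R.hasDerivAt x)
    · exact (hu.mono (uIcc_of_le hx.1.le ▸ Icc_subset_Icc_right hx.2.le)).intervalIntegrable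
    · exact (hu.mono Ioo_subset_Icc_self).stronglyMeasurableAtFilter isOpen_Ioo x hx
    · exact hu.continuousAt (Icc_mem_nhds hx.1 hx.2)
  obtain ⟨t, ht, hst, hcard, hzero⟩ := ordConnected_Icc.exists_finset_deriv_eq_zero
    (hU.sub R.continuousOn) hU' hs fun x hx => sub_eq_zero.2 (hR x hx).symm
  exact ⟨t, interior_Icc (a := α) ▸ ht, hst, hcard, fun x hx => sub_eq_zero.1 (hzero x hx)⟩

theorem exists_iteratedDerivWithin_eq_of_eqOn_finset {u : ℝ → ℝ} {D : Set ℝ} {n : ℕ}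
    (hD : UniqueDiffOn ℝ D) (hu : ContDiffOn ℝ (n + 1) u D) {α β : ℝ} (hαβ : Icc α β ⊆ D)
    {R : ℝ[X]} {s : Finset ℝ} (hs : ↑s ⊆ Icc α β) (hcard : n + 2 ≤ s.card)
    (hzero : ∀ x ∈ s, u x = R.eval x) :
    ∃ ξ ∈ Ioo α β, iteratedDerivWithin (n + 1) u D ξ = (derivative^[n + 1] R).eval ξ := by
  set F : ℕ → ℝ → ℝ := fun j x => iteratedDerivWithin j u D x - (derivative^[j] R).eval x
  have hF : ContinuousOn (F 0) (Icc α β) := by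
    simp only [F, iteratedDerivWithin_zero, Function.iterate_zero_apply]
    exact (hu.continuousOn.mono hαβ).sub R.continuousOn
  have hF' : ∀ j ≤ n, ∀ x ∈ interior (Icc α β), HasDerivAt (F j) (F (j + 1) x) x := by
    intro j hj x hx
    have hDx : D ∈ nhds x := Filter.mem_of_superset (isOpen_interior.mem_nhds hx)
      (interior_subset.trans hαβ)
    have hiter := hu.hasDerivAt_iteratedDerivWithin hD (by omega : j < n + 1) hDx
    rw [show F (j + 1) x = iteratedDerivWithin (j + 1) u D x
      - (derivative (derivative^[j] R)).eval x by simp only [F, Function.iterate_succ_apply']]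
    exact hiter.sub (Polynomial.hasDerivAt _ x)
  obtain ⟨ξ, hξ, hFξ⟩ := ordConnected_Icc.exists_hasDerivAt_chain_eq_zero hF hF' hs hcard
    fun x hx => by simp [F, hzero x hx]
  exact ⟨ξ, interior_Icc (a := α) ▸ hξ, sub_eq_zero.1 hFξ⟩

theorem exists_eval_derivative_eq_of_interpolates_primitive
    {u : ℝ → ℝ} {D : Set ℝ} {n : ℕ} (hn : 1 ≤ n) (hD : UniqueDiffOn ℝ D)
    (hu : ContDiffOn ℝ n u D) {α β : ℝ} (hαβ : Icc α β ⊆ D)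
    {ι : Type*} {s : Finset ι} {v : ι → ℝ} (hv : Set.InjOn v s)
    (hvs : ∀ i ∈ s, v i ∈ Icc α β) (hcard : s.card = n + 1)
    {P : ℝ[X]} (hP : P.natDegree ≤ n) (hinterp : ∀ i ∈ s, P.eval (v i) = ∫ x in α..v i, u x)
    {i : ι} (hi : i ∈ s) :
    ∃ ξ ∈ Ioo α β, (derivative P).eval (v i) =
      u (v i) - (derivative (Lagrange.nodal s v)).eval (v i) / (n + 1).factorial
        * iteratedDerivWithin n u D ξ := by
  classical
  obtain ⟨m, rfl⟩ : ∃ m, n = m + 1 := ⟨n - 1, by omega⟩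
  set w := Lagrange.nodal s v
  set W := (derivative w).eval (v i)
  have hW : W ≠ 0 := by
    simpa [Lagrange.nodalWeight_eq_eval_derivative_nodal hi] using
      Lagrange.nodalWeight_ne_zero hv hi
  set c := (u (v i) - (derivative P).eval (v i)) / W
  set R := P + C c * w
  have hR : ∀ x ∈ s.image v, R.eval x = ∫ t in α..x, u t := by
    simp only [Finset.mem_image, forall_exists_index, and_imp, forall_apply_eq_imp_iff₂]
    intro j hj
    simp [R, w, hinterp j hj, Lagrange.eval_nodal_at_node hj]
  have hRi : u (v i) = (derivative R).eval (v i) := by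
    simp only [R, derivative_add, derivative_C_mul, eval_add, eval_mul, eval_C, c]
    field_simp
    ring
  obtain ⟨t, ht, hst, hcard_t, hzero⟩ := exists_finset_eq_eval_derivative_of_interpolates_primitive
    (hu.continuousOn.mono hαβ)
    (fun x hx => by obtain ⟨j, hj, rfl⟩ := Finset.mem_image.1 hx; exact hvs j hj) hR
  have hvi : v i ∉ t := Finset.disjoint_left.1 hst (Finset.mem_image_of_mem v hi)
  rw [Finset.card_image_of_injOn hv] at hcard_t
  obtain ⟨ξ, hξ, hξeq⟩ := exists_iteratedDerivWithin_eq_of_eqOn_finset hD hu hαβ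
    (s := insert (v i) t)
    (by simpa [insert_subset_iff] using ⟨hvs i hi, ht.trans Ioo_subset_Icc_self⟩)
    (by rw [Finset.card_insert_of_notMem hvi]; omega)
    (Finset.forall_mem_insert _ _ _ |>.2 ⟨hRi, hzero⟩)
  have hRtop : derivative^[m + 1] (derivative R) = C (c * (m + 1 + 1).factorial) := by
    rw [← Function.iterate_succ_apply, Nat.succ_eq_add_one, ← hcard]
    exact iterate_derivative_add_C_mul_nodal v (by omega) c
  refine ⟨ξ, hξ, ?_⟩
  rw [hξeq, hRtop, eval_C]
  field_simp
  rw [mul_div_cancel₀ _ hW]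
  ring

theorem prod_erase_range_natCast_sub (i d : ℕ) :
    ∏ j ∈ (Finset.range (i + d + 1)).erase i, ((i : ℝ) - j) =
      (-1) ^ d * i.factorial * d.factorial := by
  induction d with
  | zero =>
    rw [add_zero, Finset.range_add_one, Finset.erase_insert Finset.notMem_range_self, pow_zero,
      one_mul, Nat.factorial_zero, Nat.cast_one, mul_one, ← Nat.descFactorial_self,
      Nat.descFactorial_eq_prod_range, Nat.cast_prod]
    exact Finset.prod_congr rfl fun j hj => by rw [Nat.cast_sub (Finset.mem_range.1 hj).le]
  | succ d ih =>
    rw [← add_assoc, Finset.range_add_one, Finset.erase_insert_of_ne (by omega),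
      Finset.prod_insert (by simp), ih, Nat.factorial_succ]
    push_cast
    ring

theorem sum_mul_sub_mul_of_sum_eq_one {R ι : Type*} [CommRing R] {s : Finset ι} {w : ι → R}
    (hw : ∑ i ∈ s, w i = 1) (a c : R) (e : ι → R) :
    ∑ i ∈ s, w i * (a - c * e i) = a - c * ∑ i ∈ s, w i * e i := by
  rw [Finset.mul_sum]
  simp only [mul_sub, Finset.sum_sub_distrib, ← Finset.sum_mul, hw, one_mul, mul_left_comm]

theorem exists_eval_derivative_eq_of_interpolates_primitive_equispaced
    {u : ℝ → ℝ} {D : Set ℝ} {k : ℕ} (hk : 1 ≤ k) (hD : UniqueDiffOn ℝ D)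
    (hu : ContDiffOn ℝ k u D) {c h : ℝ} (hh : 0 < h) (hcD : Icc c (c + k * h) ⊆ D)
    {P : ℝ[X]} (hP : P.natDegree ≤ k)
    (hinterp : ∀ j ∈ Finset.range (k + 1), P.eval (c + j * h) = ∫ x in c..c + j * h, u x)
    {i : ℕ} (hi : i ≤ k) :
    ∃ ξ ∈ Ioo c (c + k * h), (derivative P).eval (c + i * h) = u (c + i * h)
      - (-h) ^ k / (k + 1).factorial
        * ((-1) ^ i * i.factorial * (k - i).factorial * iteratedDerivWithin k u D ξ) := by
  set v : ℕ → ℝ := fun j => c + j * h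
  have hv : StrictMono v := fun p q hpq => by
    simp only [v]
    gcongr
  have hvs : ∀ j ∈ Finset.range (k + 1), v j ∈ Icc c (c + k * h) := fun j hj => by
    have hjk : (j : ℝ) ≤ k := by exact_mod_cast Finset.mem_range_succ_iff.1 hj
    constructor <;> simp only [v] <;> nlinarith
  have hiS : i ∈ Finset.range (k + 1) := Finset.mem_range_succ_iff.2 hi
  obtain ⟨ξ, hξ, hξeq⟩ := exists_eval_derivative_eq_of_interpolates_primitive hk hD hu hcD
    hv.injective.injOn hvs (Finset.card_range _) hP hinterp hiS
  refine ⟨ξ, hξ, hξeq.trans ?_⟩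
  obtain ⟨d, rfl⟩ := Nat.exists_eq_add_of_le hi
  have hnodal : (derivative (Lagrange.nodal (Finset.range (i + d + 1)) v)).eval (v i)
      = (-1) ^ d * i.factorial * d.factorial * h ^ (i + d) := by
    rw [Lagrange.eval_nodal_derivative_eval_node_eq hiS, Lagrange.eval_nodal]
    simp only [v, show ∀ j : ℕ, c + i * h - (c + j * h) = (i - j) * h by intros; ring]
    rw [Finset.prod_mul_distrib, Finset.prod_const, Finset.card_erase_of_mem hiS,
      Finset.card_range, prod_erase_range_natCast_sub, add_tsub_cancel_right]
  have hsq : ((-1 : ℝ) ^ i) ^ 2 = 1 := by rw [← pow_mul, mul_comm, pow_mul]; norm_num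
  rw [hnodal, add_tsub_cancel_left, neg_pow h, pow_add (-1 : ℝ) i d]
  simp only [v]
  linear_combination ((-1) ^ d * i.factorial * d.factorial * h ^ (i + d)
    / (i + d + 1).factorial * iteratedDerivWithin (i + d) u D ξ) * hsq

/-- Error estimate for weighted (WENO-type) finite-volume reconstructions built
from the `k` left-shifted stencils of `k` cells around the cell `[a, a+h]`,
with consistent weights. -/
theorem weighted_reconstruction_error
    (k : ℕ) (hk : 1 ≤ k) (h a : ℝ) (hh : 0 < h)
    (u : ℝ → ℝ)
    (hu : ContDiffOn ℝ (k + 1) u (Icc (a - ((k : ℝ) - 1) * h) (a + k * h)))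
    (Q : ℕ → Polynomial ℝ)
    (hdeg : ∀ ℓ < k, (Q ℓ).natDegree ≤ k)
    (hinterp : ∀ ℓ < k, ∀ j ∈ Finset.range (k + 1),
      (Q ℓ).eval (a - ℓ * h + j * h) = ∫ s in (a - ℓ * h)..(a - ℓ * h + j * h), u s)
    (bt b : ℕ → ℝ)
    (hbt : ∑ ℓ ∈ Finset.range k, bt ℓ = 1)
    (hb : ∑ ℓ ∈ Finset.range k, b ℓ = 1) :
    ∃ ξt ξ : ℕ → ℝ,
      (∀ ℓ < k, ξt ℓ ∈ Ioo (a - ℓ * h) (a + ((k : ℝ) - ℓ) * h)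
          ∧ ξ ℓ ∈ Ioo (a - ℓ * h) (a + ((k : ℝ) - ℓ) * h)) ∧
      (∑ ℓ ∈ Finset.range k, bt ℓ * (Polynomial.derivative (Q ℓ)).eval a)
        = u a - ((-h) ^ k / (Nat.factorial (k + 1) : ℝ))
            * ∑ ℓ ∈ Finset.range k,
                bt ℓ * ((-1 : ℝ) ^ ℓ * (Nat.factorial ℓ) * (Nat.factorial (k - ℓ)))
                  * iteratedDerivWithin k u (Icc (a - ((k : ℝ) - 1) * h) (a + k * h)) (ξt ℓ) ∧
      (∑ ℓ ∈ Finset.range k, b ℓ * (Polynomial.derivative (Q ℓ)).eval (a + h))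
        = u (a + h) - ((-h) ^ k / (Nat.factorial (k + 1) : ℝ))
            * ∑ ℓ ∈ Finset.range k,
                b ℓ * ((-1 : ℝ) ^ (ℓ + 1) * (Nat.factorial (ℓ + 1)) * (Nat.factorial (k - ℓ - 1)))
                  * iteratedDerivWithin k u (Icc (a - ((k : ℝ) - 1) * h) (a + k * h)) (ξ ℓ) := by
  set D := Icc (a - ((k : ℝ) - 1) * h) (a + k * h)
  have hkR : (1 : ℝ) ≤ k := by exact_mod_cast hk
  have hD : UniqueDiffOn ℝ D := uniqueDiffOn_Icc (by nlinarith)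
  have hstencil : ∀ ℓ < k, ∀ i ≤ k, ∃ ξ ∈ Ioo (a - ℓ * h) (a + ((k : ℝ) - ℓ) * h),
      (derivative (Q ℓ)).eval (a - ℓ * h + i * h) = u (a - ℓ * h + i * h)
        - (-h) ^ k / (k + 1).factorial
          * ((-1) ^ i * i.factorial * (k - i).factorial * iteratedDerivWithin k u D ξ) := by
    intro ℓ hℓ i hi
    have hℓR : (ℓ : ℝ) + 1 ≤ k := by exact_mod_cast hℓ
    have hright : a - ℓ * h + k * h = a + ((k : ℝ) - ℓ) * h := by ring
    have hsub : Icc (a - ℓ * h) (a - ℓ * h + k * h) ⊆ D :=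
      Icc_subset_Icc (by nlinarith) (by nlinarith [(ℓ.cast_nonneg : (0 : ℝ) ≤ ℓ)])
    simpa only [hright] using exists_eval_derivative_eq_of_interpolates_primitive_equispaced hk hD
      (hu.of_le (by exact_mod_cast k.le_succ)) hh hsub (hdeg ℓ hℓ) (hinterp ℓ hℓ) hi
  choose! ξt hξt hleft using fun ℓ hℓ => hstencil ℓ hℓ ℓ hℓ.le
  choose! ξ hξ hright using fun ℓ (hℓ : ℓ < k) => hstencil ℓ hℓ (ℓ + 1) hℓ
  have hnode : ∀ ℓ : ℕ, a - ℓ * h + ((ℓ + 1 : ℕ) : ℝ) * h = a + h := fun ℓ => by push_cast; ring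
  simp only [sub_add_cancel] at hleft
  simp only [hnode] at hright
  refine ⟨ξt, ξ, fun ℓ hℓ => ⟨hξt ℓ hℓ, hξ ℓ hℓ⟩, ?_, ?_⟩
  · rw [Finset.sum_congr rfl fun ℓ hℓ => by rw [hleft ℓ (Finset.mem_range.1 hℓ)],
      sum_mul_sub_mul_of_sum_eq_one hbt]
    simp only [mul_assoc]
  · rw [Finset.sum_congr rfl fun ℓ hℓ => by rw [hright ℓ (Finset.mem_range.1 hℓ)],
      sum_mul_sub_mul_of_sum_eq_one hb]
    simp only [mul_assoc, Nat.sub_sub]
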